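/- For a group G, the following are equivalent: (i) G has uncountable cofinality and the Bergman property; (ii) every chain U₀ ⊆ U₁ ⊆ … of symmetric subsets of G with union G such that for all i,j there is k with U_iU_j ⊆ U_k has some U_i = G; (iii) every function L: G → ℕ with L(g⁻¹) = L(g) and L(gh) ≤ L(g) + L(h) for all g,h is bounded above. -/
import Mathlib


open Pointwise

/-- A group has the Bergman property if for every generating set `U` there is `n`
such that every element is a product of at most `n` elements of `U ∪ U⁻¹`. -/
def BergmanProperty (G : Type*) [Group G] : Prop :=
  ∀ U : Set G, Subgroup.closure U = ⊤ →
    ∃ n : ℕ, ∀ g : G, ∃ l : List G,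
      l.length ≤ n ∧ (∀ x ∈ l, x ∈ U ∪ U⁻¹) ∧ l.prod = g

/-- A group has uncountable cofinality if every increasing ℕ-indexed chain of
subgroups with union `G` contains `G` as a member. -/
def UncountableCofinality (G : Type*) [Group G] : Prop :=
  ∀ c : ℕ → Subgroup G, Monotone c → (∀ g : G, ∃ n, g ∈ c n) → ∃ n, c n = ⊤

/-- Condition (ii): chain of symmetric subsets. -/
def ChainCond (G : Type*) [Group G] : Prop :=
  ∀ U : ℕ → Set G, Monotone U → (∀ i, (U i)⁻¹ = U i) →
    (∀ i j : ℕ, ∃ k, U i * U j ⊆ U k) → (∀ g : G, ∃ i, g ∈ U i) →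
    ∃ i, U i = Set.univ

/-- Condition (iii): every length function is bounded. -/
def LenCond (G : Type*) [Group G] : Prop :=
  ∀ L : G → ℕ, (∀ g : G, L g⁻¹ = L g) → (∀ g h : G, L (g * h) ≤ L g + L h) →
    ∃ N, ∀ g : G, L g ≤ N

theorem one_to_two {G : Type*} [Group G] (huc : UncountableCofinality G)
    (hbp : BergmanProperty G) : ChainCond G := by
  intro U hmono hsymm habs hcov
  obtain ⟨n, hn⟩ := huc (fun n => Subgroup.closure (U n))
    (fun a b hab => Subgroup.closure_mono (hmono hab))
    (fun g => (hcov g).imp fun i hi => Subgroup.subset_closure hi)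
  obtain ⟨m, hm⟩ := hbp (U n) hn
  obtain ⟨i0, hi0⟩ := hcov 1
  set n' := max n i0 with hn'
  have h1 : (1 : G) ∈ U n' := hmono (le_max_right _ _) hi0
  have hsub : U n ⊆ U n' := hmono (le_max_left _ _)
  choose f hf using habs
  let K : ℕ → ℕ := fun t => Nat.rec n' (fun _ k => f n' k) t
  have hK : ∀ l : List G, (∀ x ∈ l, x ∈ U n') → l.prod ∈ U (K l.length) := by
    intro l
    induction l with
    | nil => intro _; simpa [K] using h1
    | cons a l ih =>
      intro h
      have hmem : a * l.prod ∈ U n' * U (K l.length) :=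
        Set.mul_mem_mul (h a (.head _)) (ih fun x hx => h x (.tail _ hx))
      simpa [K] using hf n' (K l.length) hmem
  refine ⟨K m, Set.eq_univ_of_forall fun g => ?_⟩
  obtain ⟨l, hlen, hmeml, hprod⟩ := hm g
  have hUU : U n ∪ (U n)⁻¹ = U n := by rw [hsymm]; simp
  set l' := List.replicate (m - l.length) (1 : G) ++ l with hl'
  have hprod' : l'.prod = g := by simp [hl', hprod]
  have hlen' : l'.length = m := by simp [hl']; omega
  have hres := hK l' (fun x hx => ?_)
  · rw [hlen', hprod'] at hres; exact hres
  · rcases List.mem_append.1 hx with hx | hx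
    · rw [List.eq_of_mem_replicate hx]; exact h1
    · exact hsub (hUU ▸ hmeml x hx)

theorem two_to_three {G : Type*} [Group G] (hc : ChainCond G) : LenCond G := by
  intro L hL1 hL2
  obtain ⟨i, hi⟩ := hc (fun n => {g | L g ≤ n})
    (fun a b hab g hg => le_trans hg hab)
    (fun i => by ext g; simp only [Set.mem_inv, Set.mem_setOf_eq, hL1])
    (fun i j => ⟨i + j, fun g hg => by
      obtain ⟨x, hx, y, hy, rfl⟩ := hg
      exact le_trans (hL2 x y) (add_le_add hx hy)⟩)
    (fun g => ⟨L g, show L g ≤ L g from le_rfl⟩)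
  exact ⟨i, fun g => by have : g ∈ ({g | L g ≤ i} : Set G) := hi ▸ Set.mem_univ g; exact this⟩

theorem three_to_uc {G : Type*} [Group G] (h : LenCond G) : UncountableCofinality G := by
  intro c hmono hcov
  set L : G → ℕ := fun g => sInf {n | g ∈ c n} with hLdef
  have hmem : ∀ g, g ∈ c (L g) := fun g => Nat.sInf_mem (hcov g)
  have hsymm : ∀ g : G, L g⁻¹ = L g := by
    intro g
    simp only [hLdef]
    congr 1
    ext n
    simp [inv_mem_iff]
  have hsub : ∀ g h : G, L (g * h) ≤ L g + L h := fun g h =>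
    Nat.sInf_le (mul_mem (hmono (Nat.le_add_right _ _) (hmem g))
      (hmono (Nat.le_add_left _ _) (hmem h)))
  obtain ⟨N, hN⟩ := h L hsymm hsub
  exact ⟨N, Subgroup.eq_top_iff' _ |>.2 fun g => hmono (hN g) (hmem g)⟩

theorem three_to_bp {G : Type*} [Group G] (h : LenCond G) : BergmanProperty G := by
  intro U hU
  set P : G → ℕ → Prop := fun g n =>
    ∃ l : List G, l.length ≤ n ∧ (∀ x ∈ l, x ∈ U ∪ U⁻¹) ∧ l.prod = g with hPdef
  have hUUsymm : ∀ x : G, x ∈ U ∪ U⁻¹ → x⁻¹ ∈ U ∪ U⁻¹ := by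
    intro x hx
    rcases hx with hx | hx
    · exact Or.inr (by simpa using hx)
    · exact Or.inl (by simpa using hx)
  have hPinv : ∀ g n, P g n → P g⁻¹ n := by
    rintro g n ⟨l, hlen, hmeml, hprod⟩
    refine ⟨(l.map (·⁻¹)).reverse, by simpa using hlen, ?_, ?_⟩
    · intro x hx
      simp only [List.mem_reverse, List.mem_map] at hx
      obtain ⟨y, hy, rfl⟩ := hx
      exact hUUsymm y (hmeml y hy)
    · rw [← List.prod_inv_reverse, hprod]
  have hne : ∀ g : G, {n | P g n}.Nonempty := by
    intro g
    have hg : g ∈ Submonoid.closure (U ∪ U⁻¹) := by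
      rw [← Subgroup.closure_toSubmonoid, hU]
      trivial
    obtain ⟨l, hl, hprod⟩ := Submonoid.exists_list_of_mem_closure hg
    exact ⟨l.length, l, le_rfl, hl, hprod⟩
  set L : G → ℕ := fun g => sInf {n | P g n} with hLdef
  have hPL : ∀ g, P g (L g) := fun g => Nat.sInf_mem (hne g)
  have hsymm : ∀ g : G, L g⁻¹ = L g := by
    intro g
    simp only [hLdef]
    congr 1
    ext n
    exact ⟨fun hn => by simpa using hPinv _ n hn, fun hn => hPinv g n hn⟩
  have hsub : ∀ g h : G, L (g * h) ≤ L g + L h := by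
    intro g h
    obtain ⟨l₁, hl₁, hm₁, hp₁⟩ := hPL g
    obtain ⟨l₂, hl₂, hm₂, hp₂⟩ := hPL h
    refine Nat.sInf_le ⟨l₁ ++ l₂, ?_, ?_, ?_⟩
    · simpa using add_le_add hl₁ hl₂
    · intro x hx
      rcases List.mem_append.1 hx with hx | hx
      · exact hm₁ x hx
      · exact hm₂ x hx
    · rw [List.prod_append, hp₁, hp₂]
  obtain ⟨N, hN⟩ := h L hsymm hsub
  refine ⟨N, fun g => ?_⟩
  obtain ⟨l, hlen, hmeml, hprod⟩ := hPL g
  exact ⟨l, le_trans hlen (hN g), hmeml, hprod⟩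

theorem stmt16 {G : Type*} [Group G] :
    ((UncountableCofinality G ∧ BergmanProperty G) ↔
      (∀ U : ℕ → Set G, Monotone U → (∀ i, (U i)⁻¹ = U i) →
        (∀ i j : ℕ, ∃ k, U i * U j ⊆ U k) → (∀ g : G, ∃ i, g ∈ U i) →
        ∃ i, U i = Set.univ))
    ∧ ((UncountableCofinality G ∧ BergmanProperty G) ↔
      (∀ L : G → ℕ, (∀ g : G, L g⁻¹ = L g) → (∀ g h : G, L (g * h) ≤ L g + L h) →
        ∃ N, ∀ g : G, L g ≤ N)) := by
  constructor
  · constructor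
    · rintro ⟨huc, hbp⟩; exact one_to_two huc hbp
    · intro h
      have h3 : LenCond G := two_to_three h
      exact ⟨three_to_uc h3, three_to_bp h3⟩
  · constructor
    · rintro ⟨huc, hbp⟩; exact two_to_three (one_to_two huc hbp)
    · intro h3; exact ⟨three_to_uc h3, three_to_bp h3⟩
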